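/- Let H be a map on the space of signals u : [0,∞) → ℝⁿ that are square-integrable on every bounded interval, and let Π be a real symmetric 2×2 matrix with entries π₁₁, π₁₂, π₂₂. Then the following are equivalent: (i) for all inputs u₁, u₂ and all T > 0, writing Δu = u₁ − u₂ and Δy = Hu₁ − Hu₂, one has π₁₁·∫₀ᵀ |Δu(t)|² dt + 2·π₁₂·∫₀ᵀ Δu(t)ᵀΔy(t) dt + π₂₂·∫₀ᵀ |Δy(t)|² dt ≥ 0 (the static incremental hard IQC with multiplier Π ⊗ I); (ii) SRG_e(H) ⊆ S(Π). -/

import Mathlib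

open scoped RealInnerProductSpace Classical
open MeasureTheory

/-- The measure on `[0,∞)`. -/
noncomputable def posMeasure : Measure ℝ := volume.restrict (Set.Ici (0 : ℝ))

/-- Truncation of a signal: `u_T` equals `u` on `[0,T]` and `0` on `(T,∞)`. -/
noncomputable def trunc {E : Type*} [Zero E] (u : ℝ → E) (T : ℝ) : ℝ → E :=
  fun t => if t ≤ T then u t else 0

/-- The space of signals `[0,∞) → ℝⁿ` that are square-integrable on every bounded
interval (i.e. every truncation lies in `L²`). -/
def LocL2 (n : ℕ) : Type :=
  {u : ℝ → EuclideanSpace ℝ (Fin n) // ∀ T : ℝ, MemLp (trunc u T) 2 posMeasure}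

/-- The region `S(Π)` in the complex plane associated with a real symmetric 2×2 matrix `Π`
with entries `π₁₁, π₁₂, π₂₂`:  `S(Π) = {z ∈ ℂ : π₁₁ + 2·π₁₂·Re z + π₂₂·|z|² ≥ 0}`. -/
def SRegion (p11 p12 p22 : ℝ) : Set ℂ :=
  {z : ℂ | 0 ≤ p11 + 2 * p12 * z.re + p22 * ‖z‖ ^ 2}

/-- SRG point `z₊(u, y) = (‖y‖/‖u‖)·exp(+i·arccos(⟪u,y⟫/(‖u‖‖y‖)))` (and `0` for `y = 0`). -/
noncomputable def srgPlus {E : Type*} [NormedAddCommGroup E] [InnerProductSpace ℝ E]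
    (u y : E) : ℂ :=
  if y = 0 then 0 else
    ((‖y‖ / ‖u‖ : ℝ) : ℂ) *
      Complex.exp (Complex.I * (Real.arccos (⟪u, y⟫ / (‖u‖ * ‖y‖)) : ℝ))

/-- SRG point `z₋(u, y) = (‖y‖/‖u‖)·exp(−i·arccos(⟪u,y⟫/(‖u‖‖y‖)))` (and `0` for `y = 0`). -/
noncomputable def srgMinus {E : Type*} [NormedAddCommGroup E] [InnerProductSpace ℝ E]
    (u y : E) : ℂ :=
  if y = 0 then 0 else
    ((‖y‖ / ‖u‖ : ℝ) : ℂ) *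
      Complex.exp (-Complex.I * (Real.arccos (⟪u, y⟫ / (‖u‖ * ‖y‖)) : ℝ))

/-- The hard scaled relative graph of a map `H` on locally square-integrable signals:
`SRG_e(H) = ⋃ {z_±((Δu)_T, (Δy)_T)}` over all inputs `u₁, u₂` and all `T > 0` with
`(Δu)_T ≠ 0` (as an element of `L²`), where `Δu = u₁ − u₂` and `Δy = Hu₁ − Hu₂`. -/
noncomputable def hardSRG {n : ℕ} (H : LocL2 n → LocL2 n) : Set ℂ :=
  {z : ℂ | ∃ (u₁ u₂ : LocL2 n) (T : ℝ), 0 < T ∧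
    ∃ (h₁ : MemLp (trunc (fun t => u₁.1 t - u₂.1 t) T) 2 posMeasure)
      (h₂ : MemLp (trunc (fun t => (H u₁).1 t - (H u₂).1 t) T) 2 posMeasure),
      h₁.toLp _ ≠ 0 ∧ (z = srgPlus (h₁.toLp _) (h₂.toLp _) ∨
        z = srgMinus (h₁.toLp _) (h₂.toLp _))}


/-!
If `(Δu)_T ≠ 0`, the SRG points `z_±` of `((Δu)_T, (Δy)_T)` have `Re z = ⟪Δu, Δy⟫ / ‖Δu‖²` and
`|z| = ‖Δy‖ / ‖Δu‖` (norms and inner products of the truncations in `L²`, i.e. the integrals over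
`[0, T]`), so `z_± ∈ S(Π)` is exactly the IQC inequality divided by `‖(Δu)_T‖²`.

The only remaining case is `(Δu)_T = 0` with `π₂₂ < 0`, where the IQC asks for `(Δy)_T = 0`.
Then `S(Π)` is bounded, say by `R`, so `SRG_e(H) ⊆ S(Π)` yields the incremental gain bound
`‖(Δy)_T‖ ≤ R ‖(Δu)_T‖` whenever `(Δu)_T ≠ 0`. The perturbed input `v = u₁ + ε (Hu₁ - Hu₂)` has
truncated increment `ε (Δy)_T` against both `u₁` and `u₂`, and `(Δy)_T = (Hv - Hu₂)_T - (Hv - Hu₁)_T`,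
so `‖(Δy)_T‖ ≤ 2 R ε ‖(Δy)_T‖`, which forces `(Δy)_T = 0` once `2 R ε < 1`.
-/

open InnerProductGeometry ComplexConjugate

section SRGPoints

variable {E : Type*} [NormedAddCommGroup E] [InnerProductSpace ℝ E]

lemma srgMinus_eq_conj_srgPlus (u y : E) : srgMinus u y = conj (srgPlus u y) := by
  unfold srgMinus srgPlus
  split_ifs
  · simp
  · rw [map_mul, Complex.conj_ofReal, ← Complex.exp_conj, map_mul, Complex.conj_I,
      Complex.conj_ofReal]

lemma norm_srgPlus (u y : E) : ‖srgPlus u y‖ = ‖y‖ / ‖u‖ := by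
  unfold srgPlus
  split_ifs with hy
  · simp [hy]
  · rw [norm_mul, Complex.norm_real, Real.norm_of_nonneg (by positivity), mul_comm Complex.I,
      Complex.norm_exp_ofReal_mul_I, mul_one]

lemma re_srgPlus (u y : E) : (srgPlus u y).re = ⟪u, y⟫ / ‖u‖ ^ 2 := by
  unfold srgPlus
  split_ifs with hy
  · simp [hy]
  rcases eq_or_ne u 0 with rfl | hu
  · simp
  have hy' : ‖y‖ ≠ 0 := norm_ne_zero_iff.2 hy
  have hu' : ‖u‖ ≠ 0 := norm_ne_zero_iff.2 hu
  rw [Complex.re_ofReal_mul, mul_comm Complex.I, Complex.exp_ofReal_mul_I_re,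
    ← angle, cos_angle]
  field_simp

end SRGPoints

lemma conj_mem_SRegion_iff {p11 p12 p22 : ℝ} {z : ℂ} :
    conj z ∈ SRegion p11 p12 p22 ↔ z ∈ SRegion p11 p12 p22 := by
  simp [SRegion]

lemma isBounded_SRegion (p11 p12 : ℝ) {p22 : ℝ} (hp22 : p22 < 0) :
    Bornology.IsBounded (SRegion p11 p12 p22) := by
  refine (Metric.isBounded_iff_subset_closedBall 0).2
    ⟨1 + (|p11| + 2 * |p12|) / -p22, fun z hz => ?_⟩
  rw [mem_closedBall_zero_iff, ← sub_le_iff_le_add', le_div_iff₀ (neg_pos.2 hp22)]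
  have hre : 2 * p12 * z.re ≤ 2 * |p12| * ‖z‖ := by
    have := (le_abs_self (p12 * z.re)).trans_eq (abs_mul p12 z.re)
    nlinarith [Complex.abs_re_le_norm z, abs_nonneg p12]
  have hz' : 0 ≤ p11 + 2 * p12 * z.re + p22 * ‖z‖ ^ 2 := hz
  rcases le_or_gt ‖z‖ 1 with h1 | h1
  · nlinarith [abs_nonneg p11, abs_nonneg p12]
  · nlinarith [le_abs_self p11, abs_nonneg p11, abs_nonneg p12]

section MultiplierForm

variable {E : Type*} [NormedAddCommGroup E] [InnerProductSpace ℝ E]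

/-- The quadratic form `⟪(u, y), (Π ⊗ I) (u, y)⟫` of the multiplier `Π`. -/
def multiplierForm (p11 p12 p22 : ℝ) (u y : E) : ℝ :=
  p11 * ‖u‖ ^ 2 + 2 * p12 * ⟪u, y⟫ + p22 * ‖y‖ ^ 2

variable {p11 p12 p22 : ℝ} {u : E}

lemma srgPlus_mem_SRegion_iff (y : E) (hu : u ≠ 0) :
    srgPlus u y ∈ SRegion p11 p12 p22 ↔ 0 ≤ multiplierForm p11 p12 p22 u y := by
  have hu2 : 0 < ‖u‖ ^ 2 := by positivity
  have : p11 + 2 * p12 * (⟪u, y⟫ / ‖u‖ ^ 2) + p22 * (‖y‖ / ‖u‖) ^ 2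
      = multiplierForm p11 p12 p22 u y / ‖u‖ ^ 2 := by
    unfold multiplierForm
    field_simp
  rw [SRegion, Set.mem_ofPred_eq, re_srgPlus, norm_srgPlus, this, le_div_iff₀ hu2, zero_mul]

lemma srgMinus_mem_SRegion_iff (y : E) (hu : u ≠ 0) :
    srgMinus u y ∈ SRegion p11 p12 p22 ↔ 0 ≤ multiplierForm p11 p12 p22 u y := by
  rw [srgMinus_eq_conj_srgPlus, conj_mem_SRegion_iff, srgPlus_mem_SRegion_iff y hu]

end MultiplierForm

section Truncation

variable {E : Type*}

lemma trunc_add [AddZeroClass E] (u v : ℝ → E) (T : ℝ) :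
    trunc (u + v) T = trunc u T + trunc v T := by
  ext t; simp only [trunc, Pi.add_apply]; split_ifs <;> simp

lemma trunc_sub [AddGroup E] (u v : ℝ → E) (T : ℝ) :
    trunc (u - v) T = trunc u T - trunc v T := by
  ext t; simp only [trunc, Pi.sub_apply]; split_ifs <;> simp

lemma trunc_smul {R : Type*} [Zero E] [SMulZeroClass R E] (c : R) (u : ℝ → E) (T : ℝ) :
    trunc (c • u) T = c • trunc u T := by
  ext t; simp only [trunc, Pi.smul_apply]; split_ifs <;> simp

lemma inner_toLp_trunc [NormedAddCommGroup E] [InnerProductSpace ℝ E] {u v : ℝ → E} {T : ℝ}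
    (hT : 0 ≤ T) (hu : MemLp (trunc u T) 2 posMeasure) (hv : MemLp (trunc v T) 2 posMeasure) :
    ⟪hu.toLp _, hv.toLp _⟫ = ∫ t in (0:ℝ)..T, ⟪u t, v t⟫ := by
  have htrunc : (fun t => ⟪trunc u T t, trunc v T t⟫)
      = (Set.Iic T).indicator fun t => ⟪u t, v t⟫ := by
    ext t; simp only [trunc, Set.indicator, Set.mem_Iic]; split_ifs <;> simp
  calc ⟪hu.toLp _, hv.toLp _⟫ = ∫ t, ⟪trunc u T t, trunc v T t⟫ ∂posMeasure := by
        rw [L2.inner_def]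
        refine integral_congr_ae ?_
        filter_upwards [hu.coeFn_toLp, hv.coeFn_toLp] with t hut hvt
        rw [hut, hvt]
    _ = ∫ t in Set.Icc 0 T, ⟪u t, v t⟫ := by
        rw [htrunc, posMeasure, integral_indicator measurableSet_Iic,
          Measure.restrict_restrict measurableSet_Iic, Set.Iic_inter_Ici]
    _ = ∫ t in (0:ℝ)..T, ⟪u t, v t⟫ := by
        rw [intervalIntegral.integral_of_le hT, integral_Icc_eq_integral_Ioc]

end Truncation

namespace LocL2

variable {n : ℕ}

instance : Add (LocL2 n) :=
  ⟨fun u v => ⟨u.1 + v.1, fun T => by rw [trunc_add]; exact (u.2 T).add (v.2 T)⟩⟩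

instance : Sub (LocL2 n) :=
  ⟨fun u v => ⟨u.1 - v.1, fun T => by rw [trunc_sub]; exact (u.2 T).sub (v.2 T)⟩⟩

instance : SMul ℝ (LocL2 n) :=
  ⟨fun c u => ⟨c • u.1, fun T => by rw [trunc_smul]; exact (u.2 T).const_smul c⟩⟩

noncomputable def truncLp (T : ℝ) (u : LocL2 n) : Lp (EuclideanSpace ℝ (Fin n)) 2 posMeasure :=
  (u.2 T).toLp _

variable {T : ℝ}

lemma truncLp_add (u v : LocL2 n) : truncLp T (u + v) = truncLp T u + truncLp T v := by
  rw [truncLp, truncLp, truncLp, ← MemLp.toLp_add]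
  exact MemLp.toLp_congr _ _ (.of_eq (trunc_add _ _ _))

lemma truncLp_sub (u v : LocL2 n) : truncLp T (u - v) = truncLp T u - truncLp T v := by
  rw [truncLp, truncLp, truncLp, ← MemLp.toLp_sub]
  exact MemLp.toLp_congr _ _ (.of_eq (trunc_sub _ _ _))

lemma truncLp_smul (c : ℝ) (u : LocL2 n) : truncLp T (c • u) = c • truncLp T u := by
  rw [truncLp, truncLp, ← MemLp.toLp_const_smul]
  exact MemLp.toLp_congr _ _ (.of_eq (trunc_smul _ _ _))

lemma inner_truncLp (hT : 0 ≤ T) (u v : LocL2 n) :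
    ⟪truncLp T u, truncLp T v⟫ = ∫ t in (0:ℝ)..T, ⟪u.1 t, v.1 t⟫ :=
  inner_toLp_trunc hT _ _

lemma norm_truncLp_sq (hT : 0 ≤ T) (u : LocL2 n) :
    ‖truncLp T u‖ ^ 2 = ∫ t in (0:ℝ)..T, ‖u.1 t‖ ^ 2 := by
  simp_rw [← real_inner_self_eq_norm_sq, inner_truncLp hT]

lemma integral_form_eq_multiplierForm (hT : 0 ≤ T) (p11 p12 p22 : ℝ) (u₁ u₂ y₁ y₂ : LocL2 n) :
    p11 * (∫ t in (0:ℝ)..T, ‖u₁.1 t - u₂.1 t‖ ^ 2) +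
        2 * p12 * (∫ t in (0:ℝ)..T, ⟪u₁.1 t - u₂.1 t, y₁.1 t - y₂.1 t⟫) +
        p22 * (∫ t in (0:ℝ)..T, ‖y₁.1 t - y₂.1 t‖ ^ 2) =
      multiplierForm p11 p12 p22 (truncLp T (u₁ - u₂)) (truncLp T (y₁ - y₂)) := by
  rw [multiplierForm, norm_truncLp_sq hT, inner_truncLp hT, norm_truncLp_sq hT]
  rfl

lemma mem_hardSRG_iff {H : LocL2 n → LocL2 n} {z : ℂ} :
    z ∈ hardSRG H ↔ ∃ u₁ u₂ T, 0 < T ∧ truncLp T (u₁ - u₂) ≠ 0 ∧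
      (z = srgPlus (truncLp T (u₁ - u₂)) (truncLp T (H u₁ - H u₂)) ∨
        z = srgMinus (truncLp T (u₁ - u₂)) (truncLp T (H u₁ - H u₂))) := by
  constructor
  · rintro ⟨u₁, u₂, T, hT, _, _, hne, hz⟩
    exact ⟨u₁, u₂, T, hT, hne, hz⟩
  · rintro ⟨u₁, u₂, T, hT, hne, hz⟩
    exact ⟨u₁, u₂, T, hT, (u₁ - u₂).2 T, (H u₁ - H u₂).2 T, hne, hz⟩

end LocL2

open LocL2

section IncrementalGain

variable {n : ℕ} {H : LocL2 n → LocL2 n} {R T : ℝ}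

lemma norm_truncLp_sub_le_of_hardSRG_subset (hR : hardSRG H ⊆ Metric.closedBall 0 R)
    (hT : 0 < T) {u₁ u₂ : LocL2 n} (hne : truncLp T (u₁ - u₂) ≠ 0) :
    ‖truncLp T (H u₁ - H u₂)‖ ≤ R * ‖truncLp T (u₁ - u₂)‖ := by
  have hz := hR (mem_hardSRG_iff.2 ⟨u₁, u₂, T, hT, hne, Or.inl rfl⟩)
  rwa [mem_closedBall_zero_iff, norm_srgPlus, div_le_iff₀ (norm_pos_iff.2 hne)] at hz

lemma truncLp_sub_eq_zero_of_hardSRG_subset (hR : hardSRG H ⊆ Metric.closedBall 0 R)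
    (hT : 0 < T) {u₁ u₂ : LocL2 n} (h0 : truncLp T (u₁ - u₂) = 0) :
    truncLp T (H u₁ - H u₂) = 0 := by
  set Y := truncLp T (H u₁ - H u₂)
  by_contra hY
  obtain ⟨ε, hε, hRε⟩ := exists_pos_mul_lt one_pos (2 * R)
  rw [truncLp_sub, sub_eq_zero] at h0
  set v := u₁ + ε • (H u₁ - H u₂)
  have hv₁ : truncLp T (v - u₁) = ε • Y := by
    simp only [v, Y, truncLp_sub, truncLp_add, truncLp_smul]; abel
  have hv₂ : truncLp T (v - u₂) = ε • Y := by
    simp only [v, Y, truncLp_sub, truncLp_add, truncLp_smul, h0]; abel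
  have hgain : ∀ u, truncLp T (v - u) = ε • Y → ‖truncLp T (H v - H u)‖ ≤ R * (ε * ‖Y‖) := by
    intro u hu
    have := norm_truncLp_sub_le_of_hardSRG_subset hR hT (hu ▸ smul_ne_zero hε.ne' hY)
    rwa [hu, norm_smul, Real.norm_of_nonneg hε.le] at this
  have hY_eq : Y = truncLp T (H v - H u₂) - truncLp T (H v - H u₁) := by
    simp only [Y, truncLp_sub]; abel
  have : ‖Y‖ ≤ 2 * R * ε * ‖Y‖ := calc
    ‖Y‖ ≤ ‖truncLp T (H v - H u₂)‖ + ‖truncLp T (H v - H u₁)‖ := by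
      rw [hY_eq]; exact norm_sub_le _ _
    _ ≤ R * (ε * ‖Y‖) + R * (ε * ‖Y‖) := add_le_add (hgain u₂ hv₂) (hgain u₁ hv₁)
    _ = 2 * R * ε * ‖Y‖ := by ring
  nlinarith [norm_pos_iff.2 hY]

end IncrementalGain

/-- A map `H` on locally square-integrable signals satisfies the static incremental hard
IQC with multiplier `Π ⊗ I` — i.e. for all inputs `u₁, u₂` and all `T > 0`, with
`Δu = u₁ − u₂`, `Δy = Hu₁ − Hu₂`,
`π₁₁·∫₀ᵀ|Δu|² + 2π₁₂·∫₀ᵀ ΔuᵀΔy + π₂₂·∫₀ᵀ|Δy|² ≥ 0` — if and only if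
`SRG_e(H) ⊆ S(Π)`. -/
theorem static_hard_iqc_iff_hard_srg_subset (n : ℕ) (H : LocL2 n → LocL2 n)
    (p11 p12 p22 : ℝ) :
    (∀ (u₁ u₂ : LocL2 n) (T : ℝ), 0 < T →
        0 ≤ p11 * (∫ t in (0:ℝ)..T, ‖u₁.1 t - u₂.1 t‖ ^ 2) +
            2 * p12 * (∫ t in (0:ℝ)..T, ⟪u₁.1 t - u₂.1 t, (H u₁).1 t - (H u₂).1 t⟫) +
            p22 * (∫ t in (0:ℝ)..T, ‖(H u₁).1 t - (H u₂).1 t‖ ^ 2)) ↔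
      hardSRG H ⊆ SRegion p11 p12 p22 := by
  constructor
  · intro hIQC z hz
    obtain ⟨u₁, u₂, T, hT, hne, hz⟩ := mem_hardSRG_iff.1 hz
    have hform := integral_form_eq_multiplierForm hT.le p11 p12 p22 u₁ u₂ (H u₁) (H u₂) ▸
      hIQC u₁ u₂ T hT
    rcases hz with rfl | rfl
    · exact (srgPlus_mem_SRegion_iff _ hne).2 hform
    · exact (srgMinus_mem_SRegion_iff _ hne).2 hform
  · intro hS u₁ u₂ T hT
    rw [integral_form_eq_multiplierForm hT.le]
    by_cases hne : truncLp T (u₁ - u₂) = 0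
    · rcases le_or_gt 0 p22 with hp22 | hp22
      · simpa [multiplierForm, hne] using mul_nonneg hp22 (sq_nonneg ‖truncLp T (H u₁ - H u₂)‖)
      · obtain ⟨R, hR⟩ := (isBounded_SRegion p11 p12 hp22).subset_closedBall 0
        simp [multiplierForm, hne, truncLp_sub_eq_zero_of_hardSRG_subset (hS.trans hR) hT hne]
    · exact (srgPlus_mem_SRegion_iff _ hne).1
        (hS (mem_hardSRG_iff.2 ⟨u₁, u₂, T, hT, hne, Or.inl rfl⟩))
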